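/- Let m < n be integers with n − m ≥ 2 and φ ∈ C(𝕋^d), and let γ and σ be two minimizers for K_{m,n}φ (at terminal points γ(n) and σ(n) respectively). Minimizing curves are affine on each interval [j−1, j] between consecutive integers, so the left velocities v_j = γ̇(j−) and η_j = σ̇(j−) ∈ ℝ^d are defined for m < j ≤ n. Then for every integer j with m < j < n there exists a constant K_j, depending only on d and the C² norm of F_j, such that |v_j − η_j| ≤ K_j · dist(γ(j), σ(j)). The same conclusion holds for two curves attaining the maximum defining Ǩ_{m,n}φ. -/

import Mathlib

open MeasureTheory

noncomputable section

/-- Euclidean space ℝ^d. -/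
abbrev V (d : ℕ) := EuclideanSpace ℝ (Fin d)

/-- The torus 𝕋^d = ℝ^d/ℤ^d, as a product of circles, with its quotient distance. -/
abbrev Torus (d : ℕ) := Fin d → AddCircle (1 : ℝ)

/-- The canonical projection ℝ^d → 𝕋^d. -/
def projT {d : ℕ} (x : V d) : Torus d := fun i => (x i : AddCircle (1 : ℝ))

/-- `ζ` is an absolutely continuous curve on `[s,t]` with (square-integrable)
derivative `g`. -/
def IsAC {d : ℕ} (ζ g : ℝ → V d) (s t : ℝ) : Prop :=
  IntegrableOn g (Set.Icc s t) ∧ IntegrableOn (fun τ => ‖g τ‖ ^ 2) (Set.Icc s t) ∧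
    ∀ τ ∈ Set.Icc s t, ζ τ = ζ s + ∫ u in s..τ, g u

/-- The action 𝔸(ζ) = ∫_s^t (½|ζ̇|² − b·ζ̇) dτ − Σ_{s ≤ j < t} F_j(ζ(j)) of the curve `ζ`
with derivative `g`, for the kicked potentials `F`. -/
def action {d : ℕ} (F : ℤ → Torus d → ℝ) (b : V d) (ζ g : ℝ → V d) (s t : ℝ) : ℝ :=
  (∫ τ in s..t, ((1 : ℝ) / 2 * ‖g τ‖ ^ 2 - (inner ℝ b (g τ) : ℝ))) -
    ∑ j ∈ Finset.Ico ⌈s⌉ ⌈t⌉, F j (projT (ζ (j : ℝ)))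

/-- The action function A_{s,t}(x,x') = inf over absolutely continuous curves from
`x` to `x'`. -/
def actFn {d : ℕ} (F : ℤ → Torus d → ℝ) (b : V d) (s t : ℝ) (x x' : Torus d) : ℝ :=
  sInf {a | ∃ ζ g : ℝ → V d, IsAC ζ g s t ∧ projT (ζ s) = x ∧ projT (ζ t) = x' ∧
    action F b ζ g s t = a}

/-- The backward Lax–Oleinik operator K_{s,t}φ(x) = min_y (φ(y) + A_{s,t}(y,x)), with
the convention K_{s,s}φ = φ. -/
def KOp {d : ℕ} (F : ℤ → Torus d → ℝ) (b : V d) (s t : ℝ) (φ : Torus d → ℝ) :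
    Torus d → ℝ :=
  if s < t then fun x => sInf {a | ∃ y : Torus d, a = φ y + actFn F b s t y x} else φ

/-- The forward Lax–Oleinik operator Ǩ_{s,t}φ(x) = max_y (φ(y) − A_{s,t}(x,y)), with
the convention Ǩ_{s,s}φ = φ. -/
def KChk {d : ℕ} (F : ℤ → Torus d → ℝ) (b : V d) (s t : ℝ) (φ : Torus d → ℝ) :
    Torus d → ℝ :=
  if s < t then fun x => sSup {a | ∃ y : Torus d, a = φ y - actFn F b s t x y} else φ

/-- The seminorm ‖ψ‖_* = min_C sup_x |ψ(x) − C|. -/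
def starNorm {d : ℕ} (ψ : Torus d → ℝ) : ℝ := ⨅ C : ℝ, ⨆ x : Torus d, |ψ x - C|

/-- A minimizer for `K_{m,n}φ` at its terminal point `ζ(n)`. -/
def IsMinimizer {d : ℕ} (F : ℤ → Torus d → ℝ) (b : V d) (m n : ℤ) (φ : Torus d → ℝ)
    (ζ g : ℝ → V d) : Prop :=
  IsAC ζ g m n ∧
    KOp F b m n φ (projT (ζ (n : ℝ))) = φ (projT (ζ (m : ℝ))) + action F b ζ g m n

/-- A curve attaining `Ǩ_{m,n}φ` at its initial point `ζ(m)`. -/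
def IsMaximizer {d : ℕ} (F : ℤ → Torus d → ℝ) (b : V d) (m n : ℤ) (φ : Torus d → ℝ)
    (ζ g : ℝ → V d) : Prop :=
  IsAC ζ g m n ∧
    KChk F b m n φ (projT (ζ (m : ℝ))) = φ (projT (ζ (n : ℝ))) - action F b ζ g m n

/-- A backward stationary solution. -/
def IsBackwardSol {d : ℕ} (F : ℤ → Torus d → ℝ) (b : V d) (ψ : Torus d → ℤ → ℝ) : Prop :=
  (∀ n : ℤ, Continuous fun x => ψ x n) ∧
    ∀ m n : ℤ, m < n → ∀ x, KOp F b m n (fun y => ψ y m) x = ψ x n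

/-- A forward stationary solution. -/
def IsForwardSol {d : ℕ} (F : ℤ → Torus d → ℝ) (b : V d) (ψ : Torus d → ℤ → ℝ) : Prop :=
  (∀ n : ℤ, Continuous fun x => ψ x n) ∧
    ∀ m n : ℤ, m < n → ∀ x, KChk F b m n (fun y => ψ y n) x = ψ x m

/-- `ζ` is affine on each interval `[j-1, j]` with (left) velocity `v j`. -/
def AffineOnUnit {d : ℕ} (ζ : ℝ → V d) (v : ℤ → V d) (m n : ℤ) : Prop :=
  ∀ j : ℤ, m < j → j ≤ n → ∀ τ ∈ Set.Icc ((j : ℝ) - 1) (j : ℝ),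
    ζ τ = ζ (j : ℝ) + (τ - (j : ℝ)) • v j

/-!
Lift the value function `u = K_{m,j}φ` (resp. `Ǩ_{j,n}φ`) to `ℝ^d`; an optimal curve `ζ` is
calibrated by `u` at the kick time `j`. Moving the endpoint `ζ j` by `w` along the unit interval
`[j-1, j]` changes the action by `⟪v j - b, w⟫ + |w|²/2`, whence
`u (ζ j + w) ≤ u (ζ j) + ⟪v j - b, w⟫ + |w|²/2`; moving it along `[j, j+1]` gives a lower bound
of the same shape with slope `v (j+1) - b`, shifted by the kick `F_j (ζ j + w) - F_j (ζ j)`.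
As `F_j` is `C²` and periodic, the two paraboloids force `v j - b` to be the derivative of `u` at
`ζ j`, with remainder at most `(1/2 + L)|w|²`, `L` a bound for `D²F_j`. Slopes `p`, `q` at two
such contact points `x`, `y` satisfy `|p - q| ≤ 6 (1/2 + L) |x - y|`, and lifts of `γ(j)`, `σ(j)`
realizing the torus distance up to a factor `√d` give `K_j = 6 (1/2 + L) √d`.
-/

section InnerProductSpace

variable {E : Type*} [NormedAddCommGroup E] [InnerProductSpace ℝ E]

open Filter Topology in
lemma ContinuousLinearMap.eq_zero_of_le_mul_norm_sq {ℓ : E →L[ℝ] ℝ} {C : ℝ}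
    (h : ∀ w, ℓ w ≤ C * ‖w‖ ^ 2) : ℓ = 0 := by
  have hle : ∀ w, ℓ w ≤ 0 := fun w => by
    have hlim : Tendsto (fun t : ℝ => t * (C * ‖w‖ ^ 2)) (𝓝[>] 0) (𝓝 0) :=
      ((continuous_mul_const _).tendsto' 0 0 (zero_mul _)).mono_left nhdsWithin_le_nhds
    refine ge_of_tendsto hlim (eventually_nhdsWithin_of_forall fun t (ht : 0 < t) => ?_)
    have := h (t • w)
    rw [map_smul, smul_eq_mul, norm_smul, Real.norm_of_nonneg ht.le] at this
    nlinarith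
  ext w
  simpa using le_antisymm (hle w) (by simpa using hle (-w))

lemma abs_sub_sub_inner_le_of_touching {f ψ : E → ℝ} {x p p' : E} {D : E →L[ℝ] ℝ}
    {L : ℝ} (hL : 0 ≤ L)
    (hup : ∀ w, f (x + w) ≤ f x + inner ℝ p w + 1 / 2 * ‖w‖ ^ 2)
    (hlo : ∀ w, f x + inner ℝ p' w - 1 / 2 * ‖w‖ ^ 2 + ψ w ≤ f (x + w))
    (hψ : ∀ w, |ψ w - D w| ≤ L * ‖w‖ ^ 2) (w : E) :
    |f (x + w) - f x - inner ℝ p w| ≤ (1 / 2 + L) * ‖w‖ ^ 2 := by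
  have hslope : innerSL ℝ p' + D - innerSL ℝ p = 0 :=
    ContinuousLinearMap.eq_zero_of_le_mul_norm_sq (C := 1 + L) fun w => by
      have := hup w; have := hlo w; have := (abs_le.1 (hψ w)).1
      simp only [sub_apply, add_apply, coe_innerSL_apply]
      linarith
  have hD : D w = inner ℝ p w - inner ℝ p' w := by
    have := DFunLike.congr_fun hslope w
    simp only [sub_apply, add_apply, coe_innerSL_apply, zero_apply] at this
    linarith
  have := hup w; have := hlo w; have := (abs_le.1 (hψ w)).1
  rw [abs_le]; constructor <;> nlinarith [sq_nonneg ‖w‖]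

lemma norm_sub_le_of_abs_sub_inner_le {f : E → ℝ} {x y p q : E} {C : ℝ} (hC : 0 ≤ C)
    (hx : ∀ w, |f (x + w) - f x - inner ℝ p w| ≤ C * ‖w‖ ^ 2)
    (hy : ∀ w, f (y + w) ≤ f y + inner ℝ q w + C * ‖w‖ ^ 2) :
    ‖p - q‖ ≤ 6 * C * ‖y - x‖ := by
  set δ := y - x
  have key : ∀ w, inner ℝ (p - q) w ≤ 3 * C * (‖δ‖ ^ 2 + ‖w‖ ^ 2) := fun w => by
    have h₁ := (abs_le.1 (hx (δ + w))).1
    have h₂ := (abs_le.1 (hx δ)).2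
    rw [show x + (δ + w) = y + w by rw [← add_assoc, add_sub_cancel], inner_add_right] at h₁
    rw [add_sub_cancel x y] at h₂
    have h₃ := hy w
    have h₄ : ‖δ + w‖ ^ 2 ≤ 2 * ‖δ‖ ^ 2 + 2 * ‖w‖ ^ 2 := by
      nlinarith [norm_add_le δ w, sq_nonneg (‖δ‖ - ‖w‖), norm_nonneg (δ + w)]
    rw [inner_sub_left]
    nlinarith
  rcases eq_or_ne δ 0 with hδ | hδ
  · have : innerSL ℝ (p - q) = 0 :=
      ContinuousLinearMap.eq_zero_of_le_mul_norm_sq (C := 3 * C) fun w => by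
        have := key w
        rw [hδ, norm_zero, inner_sub_left] at this
        simp only [innerSL_apply_apply, inner_sub_left]
        linarith
    rw [hδ, norm_zero, mul_zero, ← innerSL_apply_norm (𝕜 := ℝ), this, norm_zero]
  rcases eq_or_ne (p - q) 0 with hu | hu
  · rw [hu, norm_zero]; positivity
  have hδ₀ : 0 < ‖δ‖ := norm_pos_iff.2 hδ
  have hu₀ : 0 < ‖p - q‖ := norm_pos_iff.2 hu
  have := key ((‖δ‖ / ‖p - q‖) • (p - q))
  rw [inner_smul_right, real_inner_self_eq_norm_sq, norm_smul, Real.norm_of_nonneg (by positivity),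
    div_mul_cancel₀ _ hu₀.ne'] at this
  refine le_of_mul_le_mul_left ?_ hδ₀
  field_simp at this
  nlinarith

end InnerProductSpace

section Torus

variable {d : ℕ}

def intVec (k : Fin d → ℤ) : V d := WithLp.toLp 2 fun i => (k i : ℝ)

@[simp] lemma intVec_apply (k : Fin d → ℤ) (i : Fin d) : intVec k i = k i := rfl

lemma projT_eq_projT_iff {x y : V d} : projT x = projT y ↔ ∃ k, x = y + intVec k := by
  simp only [projT, funext_iff, QuotientAddGroup.eq_iff_sub_mem, AddSubgroup.mem_zmultiples_iff,
    zsmul_eq_mul, mul_one]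
  constructor
  · intro h
    choose k hk using h
    exact ⟨k, by ext i; simp [hk]⟩
  · rintro ⟨k, rfl⟩ i
    exact ⟨k i, by simp⟩

@[simp] lemma projT_add_intVec (x : V d) (k : Fin d → ℤ) : projT (x + intVec k) = projT x :=
  projT_eq_projT_iff.2 ⟨k, rfl⟩

lemma projT_surjective : Function.Surjective (projT (d := d)) := by
  intro y
  choose r hr using fun i => QuotientAddGroup.mk_surjective (y i)
  exact ⟨WithLp.toLp 2 r, funext hr⟩

lemma norm_le_sqrt_mul_of_forall_abs_le {x : V d} {C : ℝ} (hC : 0 ≤ C) (h : ∀ i, |x i| ≤ C) :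
    ‖x‖ ≤ √d * C := by
  calc ‖x‖ = √(∑ i, |x i| ^ 2) := by simp [EuclideanSpace.norm_eq]
    _ ≤ √(∑ _i : Fin d, C ^ 2) := by gcongr with i; exact h i
    _ = √d * C := by simp [Real.sqrt_mul, Real.sqrt_sq hC]

lemma exists_norm_add_intVec_sub_le (x y : V d) :
    ∃ k, ‖y + intVec k - x‖ ≤ √d * dist (projT x) (projT y) := by
  refine ⟨fun i => round (x i - y i), norm_le_sqrt_mul_of_forall_abs_le dist_nonneg fun i => ?_⟩
  refine le_trans (le_of_eq ?_) (dist_le_pi_dist _ _ i)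
  rw [dist_eq_norm, projT, projT, ← AddCircle.coe_sub, AddCircle.norm_eq, ← abs_neg]
  simp only [PiLp.sub_apply, PiLp.add_apply, intVec_apply, inv_one, one_mul, mul_one]
  congr 1; ring

lemma exists_norm_le_of_periodic {E : Type*} [NormedAddCommGroup E] {f : V d → E}
    (hf : Continuous f) (hper : ∀ x k, f (x + intVec k) = f x) : ∃ M, ∀ x, ‖f x‖ ≤ M := by
  have hK : IsCompact (WithLp.toLp 2 '' Set.univ.pi fun _ : Fin d => Set.Icc (0 : ℝ) 1) :=
    (isCompact_univ_pi fun _ => isCompact_Icc).image (PiLp.continuous_toLp 2 _)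
  obtain ⟨M, hM⟩ := hK.exists_bound_of_continuousOn hf.continuousOn
  refine ⟨M, fun x => ?_⟩
  rw [← hper x fun i => -⌊x i⌋]
  refine hM _ ⟨fun i => Int.fract (x i),
    fun i _ => ⟨Int.fract_nonneg _, (Int.fract_lt_one _).le⟩, ?_⟩
  ext i
  simp [Int.fract, sub_eq_add_neg]

lemma fderiv_add_intVec {G : Type*} [NormedAddCommGroup G] [NormedSpace ℝ G] {Fh : V d → G}
    (hper : ∀ x k, Fh (x + intVec k) = Fh x) (x : V d) (k : Fin d → ℤ) :
    fderiv ℝ Fh (x + intVec k) = fderiv ℝ Fh x := by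
  rw [← fderiv_comp_add_right]
  simp only [hper]

lemma exists_abs_sub_sub_fderiv_le_of_periodic {Fh : V d → ℝ} (hFh : ContDiff ℝ 2 Fh)
    (hper : ∀ x k, Fh (x + intVec k) = Fh x) :
    ∃ L, 0 ≤ L ∧ ∀ x w, |Fh (x + w) - Fh x - fderiv ℝ Fh x w| ≤ L * ‖w‖ ^ 2 := by
  have hD : ContDiff ℝ 1 (fderiv ℝ Fh) := hFh.fderiv_right (by norm_num)
  obtain ⟨L, hL⟩ := exists_norm_le_of_periodic (hD.continuous_fderiv one_ne_zero)
    (fderiv_add_intVec (fderiv_add_intVec hper))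
  have hL₀ : 0 ≤ L := (norm_nonneg _).trans (hL 0)
  refine ⟨L, hL₀, fun x w => ?_⟩
  have hlip : ∀ z, ‖fderiv ℝ Fh z - fderiv ℝ Fh x‖ ≤ L * ‖z - x‖ := fun z =>
    convex_univ.norm_image_sub_le_of_norm_fderiv_le (fun z _ => hD.differentiable one_ne_zero z)
      (fun z _ => hL z) trivial trivial
  have := (convex_closedBall x ‖w‖).norm_image_sub_le_of_norm_hasFDerivWithin_le'
    (fun z _ => ((hFh.differentiable (by norm_num)) z).hasFDerivAt.hasFDerivWithinAt)
    (fun z hz => (hlip z).trans (mul_le_mul_of_nonneg_left (mem_closedBall_iff_norm.1 hz) hL₀))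
    (Metric.mem_closedBall_self (norm_nonneg w)) (y := x + w) (by simp)
  rw [add_sub_cancel_left, Real.norm_eq_abs] at this
  linarith

lemma norm_sub_le_mul_dist_of_periodic {f : V d → ℝ} (hf : ∀ z k, f (z + intVec k) = f z)
    {x y p q : V d} {C : ℝ} (hC : 0 ≤ C)
    (hx : ∀ w, |f (x + w) - f x - inner ℝ p w| ≤ C * ‖w‖ ^ 2)
    (hy : ∀ w, f (y + w) ≤ f y + inner ℝ q w + C * ‖w‖ ^ 2) :
    ‖p - q‖ ≤ 6 * C * √d * dist (projT x) (projT y) := by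
  obtain ⟨k, hk⟩ := exists_norm_add_intVec_sub_le x y
  have hy' : ∀ w, f (y + intVec k + w) ≤ f (y + intVec k) + inner ℝ q w + C * ‖w‖ ^ 2 :=
    fun w => by rw [add_right_comm, hf, hf]; exact hy w
  calc ‖p - q‖ ≤ 6 * C * ‖y + intVec k - x‖ := norm_sub_le_of_abs_sub_inner_le hC hx hy'
    _ ≤ 6 * C * (√d * dist (projT x) (projT y)) := by gcongr
    _ = 6 * C * √d * dist (projT x) (projT y) := by ring

lemma bddAbove_range_of_continuous_comp_projT {f : Torus d → ℝ}
    (hf : Continuous fun x => f (projT x)) : BddAbove (Set.range f) := by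
  obtain ⟨M, hM⟩ := exists_norm_le_of_periodic hf fun x k => by simp only [projT_add_intVec]
  refine ⟨M, ?_⟩
  rintro _ ⟨y, rfl⟩
  obtain ⟨x, rfl⟩ := projT_surjective y
  exact (le_abs_self _).trans (hM x)

end Torus

section Curves

open Set

variable {d : ℕ} {ζ g ζ' g' : ℝ → V d} {s r t u : ℝ}

def lagrangian (b v : V d) : ℝ := 1 / 2 * ‖v‖ ^ 2 - inner ℝ b v

lemma action_eq (F : ℤ → Torus d → ℝ) (b : V d) (ζ g : ℝ → V d) (s t : ℝ) :
    action F b ζ g s t =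
      (∫ τ in s..t, lagrangian b (g τ)) - ∑ j ∈ Finset.Ico ⌈s⌉ ⌈t⌉, F j (projT (ζ j)) :=
  rfl

lemma neg_half_norm_sq_le_lagrangian (b v : V d) : -(1 / 2 * ‖b‖ ^ 2) ≤ lagrangian b v := by
  have := norm_sub_sq_real v b
  rw [lagrangian, real_inner_comm]
  nlinarith [sq_nonneg ‖v - b‖]

namespace IsAC

lemma intervalIntegrable (h : IsAC ζ g s t) (hsu : s ≤ u) (hur : u ≤ r) (hrt : r ≤ t) :
    IntervalIntegrable g volume u r :=
  (intervalIntegrable_iff_integrableOn_Icc_of_le hur).2 (h.1.mono_set (Icc_subset_Icc hsu hrt))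

lemma intervalIntegrable_inner (h : IsAC ζ g s t) (hst : s ≤ t) (w : V d) :
    IntervalIntegrable (fun τ => inner ℝ w (g τ)) volume s t :=
  (intervalIntegrable_iff_integrableOn_Icc_of_le hst).2 ((innerSL ℝ w).integrable_comp h.1)

lemma intervalIntegrable_lagrangian (h : IsAC ζ g s t) (hst : s ≤ t) (b : V d) :
    IntervalIntegrable (fun τ => lagrangian b (g τ)) volume s t :=
  (((intervalIntegrable_iff_integrableOn_Icc_of_le hst).2 h.2.1).const_mul _).sub
    (h.intervalIntegrable_inner hst b)

lemma integral_eq_sub (h : IsAC ζ g s t) (hst : s ≤ t) : ∫ τ in s..t, g τ = ζ t - ζ s := by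
  rw [h.2.2 t ⟨hst, le_rfl⟩]
  abel

lemma mono (h : IsAC ζ g s t) (hsu : s ≤ u) (hur : u ≤ r) (hrt : r ≤ t) : IsAC ζ g u r := by
  refine ⟨h.1.mono_set (Icc_subset_Icc hsu hrt), h.2.1.mono_set (Icc_subset_Icc hsu hrt),
    fun τ hτ => ?_⟩
  rw [h.2.2 τ ⟨hsu.trans hτ.1, hτ.2.trans hrt⟩, h.2.2 u ⟨hsu, hur.trans hrt⟩, add_assoc,
    intervalIntegral.integral_add_adjacent_intervals
      (h.intervalIntegrable le_rfl hsu (hur.trans hrt))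
      (h.intervalIntegrable hsu hτ.1 (hτ.2.trans hrt))]

lemma trans (h₁ : IsAC ζ g s r) (h₂ : IsAC ζ g r t) (hsr : s ≤ r) (hrt : r ≤ t) :
    IsAC ζ g s t := by
  rw [IsAC, ← Icc_union_Icc_eq_Icc hsr hrt]
  refine ⟨h₁.1.union h₂.1, h₁.2.1.union h₂.2.1, ?_⟩
  rintro τ (hτ | hτ)
  · exact h₁.2.2 τ hτ
  · rw [h₂.2.2 τ hτ, h₁.2.2 r ⟨hsr, le_rfl⟩, add_assoc,
      intervalIntegral.integral_add_adjacent_intervals (h₁.intervalIntegrable le_rfl hsr le_rfl)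
        (h₂.intervalIntegrable le_rfl hτ.1 hτ.2)]

lemma congr (h : IsAC ζ g s t) (hζ : EqOn ζ ζ' (Icc s t)) (hg : EqOn g g' (Ioc s t)) :
    IsAC ζ' g' s t := by
  refine ⟨?_, ?_, fun τ hτ => ?_⟩
  · exact (integrableOn_Icc_iff_integrableOn_Ioc (f := g')).2
      (((integrableOn_Icc_iff_integrableOn_Ioc (f := g)).1 h.1).congr_fun hg measurableSet_Ioc)
  · exact (integrableOn_Icc_iff_integrableOn_Ioc (f := fun τ => ‖g' τ‖ ^ 2)).2
      (((integrableOn_Icc_iff_integrableOn_Ioc (f := fun τ => ‖g τ‖ ^ 2)).1 h.2.1).congr_fun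
        (fun τ hτ => congrArg (‖·‖ ^ 2) (hg hτ)) measurableSet_Ioc)
  · have hs : s ∈ Icc s t := ⟨le_rfl, hτ.1.trans hτ.2⟩
    rw [← hζ hτ, ← hζ hs, h.2.2 τ hτ]
    congr 1
    refine intervalIntegral.integral_congr_ae (Filter.Eventually.of_forall fun x hx => hg ?_)
    rw [uIoc_of_le hτ.1] at hx
    exact ⟨hx.1, hx.2.trans hτ.2⟩

lemma add_const (h : IsAC ζ g s t) (c : V d) : IsAC (fun τ => ζ τ + c) g s t :=
  ⟨h.1, h.2.1, fun τ hτ => by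
    show ζ τ + c = ζ s + c + _
    rw [h.2.2 τ hτ]; abel⟩

lemma add_affine (h : IsAC ζ g s t) (e w : V d) :
    IsAC (fun τ => ζ τ + e + (τ - s) • w) (fun τ => g τ + w) s t := by
  refine ⟨h.1.add (integrableOn_const measure_Icc_lt_top.ne), ?_, fun τ hτ => ?_⟩
  · have : (fun τ => ‖g τ + w‖ ^ 2) = fun τ => ‖g τ‖ ^ 2 + 2 * inner ℝ w (g τ) + ‖w‖ ^ 2 := by
      ext τ; rw [norm_add_sq_real, real_inner_comm]
    rw [this]
    exact (h.2.1.add (((innerSL ℝ w).integrable_comp h.1).const_mul 2)).add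
      (integrableOn_const measure_Icc_lt_top.ne)
  · rw [intervalIntegral.integral_add (h.intervalIntegrable le_rfl hτ.1 hτ.2)
      intervalIntegrable_const, intervalIntegral.integral_const]
    beta_reduce
    rw [h.2.2 τ hτ]
    simp only [sub_self, zero_smul, add_zero]
    abel

end IsAC

end Curves

section Action

open Set

variable {d : ℕ} {F : ℤ → Torus d → ℝ} {b : V d} {ζ g ζ' g' : ℝ → V d} {s r t : ℝ}

lemma action_add (h₁ : IsAC ζ g s r) (h₂ : IsAC ζ g r t) (hsr : s ≤ r) (hrt : r ≤ t) :
    action F b ζ g s t = action F b ζ g s r + action F b ζ g r t := by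
  simp only [action_eq]
  rw [← intervalIntegral.integral_add_adjacent_intervals (h₁.intervalIntegrable_lagrangian hsr b)
      (h₂.intervalIntegrable_lagrangian hrt b),
    ← Finset.Ico_union_Ico_eq_Ico (Int.ceil_mono hsr) (Int.ceil_mono hrt),
    Finset.sum_union (Finset.Ico_disjoint_Ico_consecutive _ _ _)]
  ring

lemma action_congr (hst : s ≤ t) (hζ : EqOn ζ ζ' (Icc s t)) (hg : EqOn g g' (Ioc s t)) :
    action F b ζ g s t = action F b ζ' g' s t := by
  simp only [action_eq]
  congr 1
  · refine intervalIntegral.integral_congr_ae (Filter.Eventually.of_forall fun τ hτ => ?_)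
    rw [uIoc_of_le hst] at hτ
    rw [hg hτ]
  · refine Finset.sum_congr rfl fun i hi => ?_
    rw [Finset.mem_Ico, Int.ceil_le, Int.lt_ceil] at hi
    rw [hζ ⟨hi.1, hi.2.le⟩]

lemma action_add_intVec (k : Fin d → ℤ) :
    action F b (fun τ => ζ τ + intVec k) g s t = action F b ζ g s t := by
  simp only [action_eq, projT_add_intVec]

lemma action_add_affine (a : ℤ) (h : IsAC ζ g a (a + 1)) (e w : V d) :
    action F b (fun τ => ζ τ + e + (τ - a) • w) (fun τ => g τ + w) a (a + 1) =
      action F b ζ g a (a + 1) + inner ℝ (ζ (a + 1) - ζ a - b) w + 1 / 2 * ‖w‖ ^ 2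
        - (F a (projT (ζ a + e)) - F a (projT (ζ a))) := by
  have ha : (a : ℝ) ≤ a + 1 := by linarith
  have hkick : Finset.Ico ⌈(a : ℝ)⌉ ⌈(a : ℝ) + 1⌉ = {a} := by
    rw [Int.ceil_intCast, Int.ceil_add_one, Int.ceil_intCast, Finset.Ico_add_one_right_eq_Icc,
      Finset.Icc_self]
  have hlag : ∀ τ, lagrangian b (g τ + w) =
      lagrangian b (g τ) + (inner ℝ w (g τ) + (1 / 2 * ‖w‖ ^ 2 - inner ℝ b w)) := fun τ => by
    simp only [lagrangian, norm_add_sq_real, inner_add_right, real_inner_comm w]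
    ring
  have hg := h.intervalIntegrable le_rfl ha le_rfl
  have hint : ∫ τ in (a : ℝ)..a + 1, inner ℝ w (g τ) = inner ℝ w (ζ (a + 1) - ζ a) := by
    rw [← h.integral_eq_sub ha]
    exact (innerSL ℝ w).intervalIntegral_comp_comm hg
  simp only [action_eq, hkick, Finset.sum_singleton, hlag]
  rw [intervalIntegral.integral_add (h.intervalIntegrable_lagrangian ha b)
      ((h.intervalIntegrable_inner ha w).add intervalIntegrable_const),
    intervalIntegral.integral_add (h.intervalIntegrable_inner ha w) intervalIntegrable_const, hint,
    intervalIntegral.integral_const]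
  simp only [sub_self, zero_smul, add_zero, add_sub_cancel_left, smul_eq_mul, one_mul,
    inner_sub_right, real_inner_comm w]
  ring

lemma exists_isAC_concat {ζ₁ g₁ ζ₂ g₂ : ℝ → V d} (h₁ : IsAC ζ₁ g₁ s r) (h₂ : IsAC ζ₂ g₂ r t)
    (hsr : s ≤ r) (hrt : r ≤ t) (hr : ζ₁ r = ζ₂ r) :
    ∃ ζ g, IsAC ζ g s t ∧ ζ s = ζ₁ s ∧ ζ t = ζ₂ t ∧
      action F b ζ g s t = action F b ζ₁ g₁ s r + action F b ζ₂ g₂ r t := by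
  let ζ := fun τ => if τ ≤ r then ζ₁ τ else ζ₂ τ
  let g := fun τ => if τ ≤ r then g₁ τ else g₂ τ
  have e₁ : EqOn ζ ζ₁ (Icc s r) := fun τ hτ => if_pos hτ.2
  have e₁' : EqOn g g₁ (Ioc s r) := fun τ hτ => if_pos hτ.2
  have e₂ : EqOn ζ ζ₂ (Icc r t) := fun τ hτ => by
    rcases hτ.1.eq_or_lt with rfl | hlt
    · exact (if_pos le_rfl).trans hr
    · exact if_neg hlt.not_ge
  have e₂' : EqOn g g₂ (Ioc r t) := fun τ hτ => if_neg hτ.1.not_ge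
  have hA₁ : IsAC ζ g s r := h₁.congr e₁.symm e₁'.symm
  have hA₂ : IsAC ζ g r t := h₂.congr e₂.symm e₂'.symm
  refine ⟨ζ, g, hA₁.trans hA₂ hsr hrt, e₁ ⟨le_rfl, hsr⟩, e₂ ⟨hrt, le_rfl⟩, ?_⟩
  rw [action_add hA₁ hA₂ hsr hrt, action_congr hsr e₁ e₁', action_congr hrt e₂ e₂']

lemma exists_le_action (hF : ∀ i, BddAbove (range (F i))) (b : V d) (hst : s ≤ t) :
    ∃ B, ∀ ζ g, IsAC ζ g s t → B ≤ action F b ζ g s t := by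
  choose M hM using hF
  refine ⟨(t - s) * -(1 / 2 * ‖b‖ ^ 2) - ∑ i ∈ Finset.Ico ⌈s⌉ ⌈t⌉, M i, fun ζ g h => ?_⟩
  have hint := intervalIntegral.integral_mono_on hst intervalIntegrable_const
    (h.intervalIntegrable_lagrangian hst b) fun τ _ => neg_half_norm_sq_le_lagrangian b (g τ)
  rw [intervalIntegral.integral_const, smul_eq_mul] at hint
  have hkick : ∑ i ∈ Finset.Ico ⌈s⌉ ⌈t⌉, F i (projT (ζ i)) ≤ ∑ i ∈ Finset.Ico ⌈s⌉ ⌈t⌉, M i :=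
    Finset.sum_le_sum fun i _ => hM i (mem_range_self _)
  rw [action_eq]
  linarith

end Action

section ValueFunctions

open Set

variable {d : ℕ} {F : ℤ → Torus d → ℝ} {b : V d} {φ : Torus d → ℝ} {ζ g : ℝ → V d}
  {s r t c : ℝ} {x y : Torus d}

lemma actFn_le_action (hF : ∀ i, BddAbove (range (F i))) (hst : s ≤ t) (h : IsAC ζ g s t) :
    actFn F b s t (projT (ζ s)) (projT (ζ t)) ≤ action F b ζ g s t := by
  obtain ⟨B, hB⟩ := exists_le_action hF b hst
  exact csInf_le ⟨B, by rintro _ ⟨ζ, g, h, -, -, rfl⟩; exact hB ζ g h⟩ ⟨ζ, g, h, rfl, rfl, rfl⟩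

lemma le_actFn (hst : s < t)
    (hc : ∀ ζ g, IsAC ζ g s t → projT (ζ s) = x → projT (ζ t) = y → c ≤ action F b ζ g s t) :
    c ≤ actFn F b s t x y := by
  obtain ⟨X, rfl⟩ := projT_surjective x
  obtain ⟨Y, rfl⟩ := projT_surjective y
  set W := (t - s)⁻¹ • (Y - X)
  have hseg : IsAC (fun τ => X + (τ - s) • W) (fun _ => W) s t :=
    ⟨integrableOn_const measure_Icc_lt_top.ne, integrableOn_const measure_Icc_lt_top.ne,
      fun τ _ => by simp⟩
  have hend : X + (t - s) • W = Y := by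
    rw [smul_smul, mul_inv_cancel₀ (sub_ne_zero.2 hst.ne'), one_smul, add_sub_cancel]
  refine le_csInf ⟨_, _, _, hseg, by simp, by rw [hend], rfl⟩ ?_
  rintro _ ⟨ζ, g, h, hs, ht, rfl⟩
  exact hc ζ g h hs ht

lemma exists_le_actFn (hF : ∀ i, BddAbove (range (F i))) (b : V d) (hst : s < t) :
    ∃ B, ∀ x y, B ≤ actFn F b s t x y :=
  let ⟨B, hB⟩ := exists_le_action hF b hst.le
  ⟨B, fun _ _ => le_actFn hst fun ζ g h _ _ => hB ζ g h⟩

lemma actFn_le_add (hF : ∀ i, BddAbove (range (F i))) (hsr : s < r) (hrt : r < t)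
    (x y z : Torus d) : actFn F b s t x z ≤ actFn F b s r x y + actFn F b r t y z := by
  have key : ∀ ζ₁ g₁ ζ₂ g₂, IsAC ζ₁ g₁ s r → IsAC ζ₂ g₂ r t → projT (ζ₁ s) = x →
      projT (ζ₁ r) = y → projT (ζ₂ r) = y → projT (ζ₂ t) = z →
      actFn F b s t x z ≤ action F b ζ₁ g₁ s r + action F b ζ₂ g₂ r t := by
    intro ζ₁ g₁ ζ₂ g₂ h₁ h₂ h₁s h₁r h₂r h₂t
    obtain ⟨k, hk⟩ := projT_eq_projT_iff.1 (h₁r.trans h₂r.symm)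
    obtain ⟨ζ, g, h, hs, ht, hact⟩ :=
      exists_isAC_concat (F := F) (b := b) h₁ (h₂.add_const (intVec k)) hsr.le hrt.le hk
    have := actFn_le_action (b := b) hF (hsr.trans hrt).le h
    rwa [hs, ht, projT_add_intVec, h₁s, h₂t, hact, action_add_intVec] at this
  have hpast : ∀ ζ₂ g₂, IsAC ζ₂ g₂ r t → projT (ζ₂ r) = y → projT (ζ₂ t) = z →
      actFn F b s t x z - action F b ζ₂ g₂ r t ≤ actFn F b s r x y := fun ζ₂ g₂ h₂ h₂r h₂t =>
    le_actFn hsr fun ζ₁ g₁ h₁ h₁s h₁r => by linarith [key ζ₁ g₁ ζ₂ g₂ h₁ h₂ h₁s h₁r h₂r h₂t]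
  have := le_actFn (c := actFn F b s t x z - actFn F b s r x y) hrt fun ζ₂ g₂ h₂ h₂r h₂t => by
    linarith [hpast ζ₂ g₂ h₂ h₂r h₂t]
  linarith

lemma KOp_le (hF : ∀ i, BddAbove (range (F i))) (hφ : BddBelow (range φ)) (hst : s < t)
    (x y : Torus d) : KOp F b s t φ x ≤ φ y + actFn F b s t y x := by
  obtain ⟨B, hB⟩ := exists_le_actFn hF b hst
  obtain ⟨c, hc⟩ := hφ
  rw [KOp, if_pos hst]
  exact csInf_le ⟨c + B, by rintro _ ⟨y, rfl⟩; linarith [hc (mem_range_self y), hB y x]⟩ ⟨y, rfl⟩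

lemma le_KOp (hst : s < t) (h : ∀ y, c ≤ φ y + actFn F b s t y x) : c ≤ KOp F b s t φ x := by
  rw [KOp, if_pos hst]
  exact le_csInf ⟨_, 0, rfl⟩ fun _ ⟨y, hy⟩ => hy ▸ h y

lemma le_KChk (hF : ∀ i, BddAbove (range (F i))) (hφ : BddAbove (range φ)) (hst : s < t)
    (x y : Torus d) : φ y - actFn F b s t x y ≤ KChk F b s t φ x := by
  obtain ⟨B, hB⟩ := exists_le_actFn hF b hst
  obtain ⟨c, hc⟩ := hφ
  rw [KChk, if_pos hst]
  exact le_csSup ⟨c - B, by rintro _ ⟨y, rfl⟩; linarith [hc (mem_range_self y), hB x y]⟩ ⟨y, rfl⟩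

lemma KChk_le (hst : s < t) (h : ∀ y, φ y - actFn F b s t x y ≤ c) : KChk F b s t φ x ≤ c := by
  rw [KChk, if_pos hst]
  exact csSup_le ⟨_, 0, rfl⟩ fun _ ⟨y, hy⟩ => hy ▸ h y

lemma KOp_le_add_action (hF : ∀ i, BddAbove (range (F i))) (hφ : BddBelow (range φ))
    (hst : s < t) (h : IsAC ζ g s t) :
    KOp F b s t φ (projT (ζ t)) ≤ φ (projT (ζ s)) + action F b ζ g s t :=
  (KOp_le hF hφ hst _ _).trans (by gcongr; exact actFn_le_action hF hst.le h)

lemma KOp_le_KOp_add_action (hF : ∀ i, BddAbove (range (F i))) (hφ : BddBelow (range φ))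
    (hsr : s < r) (hrt : r < t) (h : IsAC ζ g r t) :
    KOp F b s t φ (projT (ζ t)) ≤ KOp F b s r φ (projT (ζ r)) + action F b ζ g r t := by
  have : KOp F b s t φ (projT (ζ t)) - action F b ζ g r t ≤ KOp F b s r φ (projT (ζ r)) :=
    le_KOp hsr fun y => by
      linarith [KOp_le (b := b) hF hφ (hsr.trans hrt) (projT (ζ t)) y,
        actFn_le_add (b := b) hF hsr hrt y (projT (ζ r)) (projT (ζ t)),
        actFn_le_action (b := b) hF hrt.le h]
  linarith

lemma sub_action_le_KChk (hF : ∀ i, BddAbove (range (F i))) (hφ : BddAbove (range φ))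
    (hst : s < t) (h : IsAC ζ g s t) :
    φ (projT (ζ t)) - action F b ζ g s t ≤ KChk F b s t φ (projT (ζ s)) :=
  le_trans (by gcongr; exact actFn_le_action hF hst.le h) (le_KChk hF hφ hst _ _)

lemma KChk_le_KChk_add_action (hF : ∀ i, BddAbove (range (F i))) (hφ : BddAbove (range φ))
    (hsr : s < r) (hrt : r < t) (h : IsAC ζ g s r) :
    KChk F b r t φ (projT (ζ r)) ≤ KChk F b s t φ (projT (ζ s)) + action F b ζ g s r :=
  KChk_le hrt fun z => by
    linarith [le_KChk (b := b) hF hφ (hsr.trans hrt) (projT (ζ s)) z,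
      actFn_le_add (b := b) hF hsr hrt (projT (ζ s)) (projT (ζ r)) z,
      actFn_le_action (b := b) hF hsr.le h]

end ValueFunctions

section Calibration

open Set

variable {d : ℕ} {F : ℤ → Torus d → ℝ} {b : V d} {f : V d → ℝ} {ζ g ζ' g' : ℝ → V d}
  {v η : ℤ → V d} {m j n : ℤ}

def IsCalibrated (F : ℤ → Torus d → ℝ) (b : V d) (f : V d → ℝ) (ζ g : ℝ → V d) (s r t : ℝ) :
    Prop :=
  (∀ ζ₁ g₁, IsAC ζ₁ g₁ s r → ζ₁ s = ζ s →
    f (ζ₁ r) - action F b ζ₁ g₁ s r ≤ f (ζ r) - action F b ζ g s r) ∧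
  (∀ ζ₂ g₂, IsAC ζ₂ g₂ r t → ζ₂ t = ζ t →
    f (ζ r) + action F b ζ g r t ≤ f (ζ₂ r) + action F b ζ₂ g₂ r t)

lemma IsMinimizer.isCalibrated {φ : Torus d → ℝ} (hF : ∀ i, BddAbove (range (F i)))
    (hφ : BddBelow (range φ)) (h : IsMinimizer F b m n φ ζ g) (hmj : m < j) (hjn : j < n) :
    IsCalibrated F b (fun z => KOp F b m j φ (projT z)) ζ g m j n := by
  obtain ⟨hAC, hK⟩ := h
  have hmj' : (m : ℝ) < j := Int.cast_lt.2 hmj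
  have hjn' : (j : ℝ) < n := Int.cast_lt.2 hjn
  have hpast := hAC.mono le_rfl hmj'.le hjn'.le
  have hfut := hAC.mono hmj'.le hjn'.le le_rfl
  have hsplit := action_add (F := F) (b := b) hpast hfut hmj'.le hjn'.le
  have h₁ := KOp_le_add_action (b := b) hF hφ hmj' hpast
  have h₂ := KOp_le_KOp_add_action (b := b) hF hφ hmj' hjn' hfut
  refine ⟨fun ζ₁ g₁ hζ₁ hs => ?_, fun ζ₂ g₂ hζ₂ ht => ?_⟩
  · have := KOp_le_add_action (b := b) hF hφ hmj' hζ₁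
    rw [hs] at this
    dsimp only
    linarith
  · have := KOp_le_KOp_add_action (b := b) hF hφ hmj' hjn' hζ₂
    rw [ht] at this
    dsimp only
    linarith

lemma IsMaximizer.isCalibrated {φ : Torus d → ℝ} (hF : ∀ i, BddAbove (range (F i)))
    (hφ : BddAbove (range φ)) (h : IsMaximizer F b m n φ ζ g) (hmj : m < j) (hjn : j < n) :
    IsCalibrated F b (fun z => KChk F b j n φ (projT z)) ζ g m j n := by
  obtain ⟨hAC, hK⟩ := h
  have hmj' : (m : ℝ) < j := Int.cast_lt.2 hmj
  have hjn' : (j : ℝ) < n := Int.cast_lt.2 hjn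
  have hpast := hAC.mono le_rfl hmj'.le hjn'.le
  have hfut := hAC.mono hmj'.le hjn'.le le_rfl
  have hsplit := action_add (F := F) (b := b) hpast hfut hmj'.le hjn'.le
  have h₁ := sub_action_le_KChk (b := b) hF hφ hjn' hfut
  have h₂ := KChk_le_KChk_add_action (b := b) hF hφ hmj' hjn' hpast
  refine ⟨fun ζ₁ g₁ hζ₁ hs => ?_, fun ζ₂ g₂ hζ₂ ht => ?_⟩
  · have := KChk_le_KChk_add_action (b := b) hF hφ hmj' hjn' hζ₁
    rw [hs] at this
    dsimp only
    linarith
  · have := sub_action_le_KChk (b := b) hF hφ hjn' hζ₂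
    rw [ht] at this
    dsimp only
    linarith

lemma IsCalibrated.le_add_inner (hcal : IsCalibrated F b f ζ g m j n) (hAC : IsAC ζ g m j)
    (hmj : m < j) (w : V d) :
    f (ζ j + w) ≤ f (ζ j) + inner ℝ (ζ j - ζ (j - 1) - b) w + 1 / 2 * ‖w‖ ^ 2 := by
  obtain ⟨a, rfl⟩ : ∃ a : ℤ, j = a + 1 := ⟨j - 1, by ring⟩
  push_cast at hcal hAC ⊢
  rw [add_sub_cancel_right]
  have hm : (m : ℝ) ≤ a := by exact_mod_cast Int.lt_add_one_iff.1 hmj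
  have h₁ := hAC.mono le_rfl hm (by linarith)
  have h₂ := hAC.mono hm (by linarith) le_rfl
  obtain ⟨ζ₁, g₁, hζ₁, hs, ht, hact⟩ :=
    exists_isAC_concat (F := F) (b := b) h₁ (h₂.add_affine 0 w) hm (by linarith) (by simp)
  have := hcal.1 ζ₁ g₁ hζ₁ hs
  rw [ht, hact, action_add_affine a h₂, action_add h₁ h₂ hm (by linarith)] at this
  simp only [add_zero, add_sub_cancel_left, one_smul, sub_self] at this
  linarith

lemma IsCalibrated.add_inner_le (hcal : IsCalibrated F b f ζ g m j n) (hAC : IsAC ζ g j n)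
    (hjn : j < n) (w : V d) :
    f (ζ j) + inner ℝ (ζ (j + 1) - ζ j - b) w - 1 / 2 * ‖w‖ ^ 2
      + (F j (projT (ζ j + w)) - F j (projT (ζ j))) ≤ f (ζ j + w) := by
  have hn : (j : ℝ) + 1 ≤ n := by exact_mod_cast Int.add_one_le_iff.2 hjn
  have h₁ := hAC.mono le_rfl (by linarith) hn
  have h₂ := hAC.mono (by linarith) hn le_rfl
  obtain ⟨ζ₂, g₂, hζ₂, hs, ht, hact⟩ :=
    exists_isAC_concat (F := F) (b := b) (h₁.add_affine w (-w)) h₂ (by linarith) hn (by simp)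
  have := hcal.2 ζ₂ g₂ hζ₂ ht
  rw [hs, hact, action_add_affine j h₁, action_add h₁ h₂ (by linarith) hn] at this
  simp only [sub_self, zero_smul, add_zero, inner_neg_right, norm_neg] at this
  linarith

lemma IsCalibrated.abs_sub_inner_le {L : ℝ} {D : V d →L[ℝ] ℝ} (hcal : IsCalibrated F b f ζ g m j n)
    (hAC : IsAC ζ g m n) (haff : AffineOnUnit ζ v m n) (hmj : m < j) (hjn : j < n) (hL : 0 ≤ L)
    (hT : ∀ w, |F j (projT (ζ j + w)) - F j (projT (ζ j)) - D w| ≤ L * ‖w‖ ^ 2) (w : V d) :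
    |f (ζ j + w) - f (ζ j) - inner ℝ (v j - b) w| ≤ (1 / 2 + L) * ‖w‖ ^ 2 := by
  have hmj' : (m : ℝ) ≤ j := Int.cast_le.2 hmj.le
  have hjn' : (j : ℝ) ≤ n := Int.cast_le.2 hjn.le
  have hv : v j = ζ j - ζ (j - 1) := by
    rw [haff j hmj hjn.le (j - 1) ⟨le_rfl, by linarith⟩, show (j : ℝ) - 1 - j = -1 by ring,
      neg_one_smul]
    abel
  rw [hv]
  exact abs_sub_sub_inner_le_of_touching hL (hcal.le_add_inner (hAC.mono le_rfl hmj' hjn') hmj)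
    (hcal.add_inner_le (hAC.mono hmj' hjn' le_rfl) hjn) hT w

lemma IsCalibrated.norm_sub_le_mul_dist {L : ℝ} {D : V d → V d →L[ℝ] ℝ}
    (hf : ∀ z k, f (z + intVec k) = f z) (hL : 0 ≤ L)
    (hT : ∀ x w, |F j (projT (x + w)) - F j (projT x) - D x w| ≤ L * ‖w‖ ^ 2)
    (h : IsCalibrated F b f ζ g m j n) (h' : IsCalibrated F b f ζ' g' m j n)
    (hAC : IsAC ζ g m n) (hAC' : IsAC ζ' g' m n)
    (hv : AffineOnUnit ζ v m n) (hη : AffineOnUnit ζ' η m n) (hmj : m < j) (hjn : j < n) :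
    ‖v j - η j‖ ≤ 6 * (1 / 2 + L) * √d * dist (projT (ζ j)) (projT (ζ' j)) := by
  have := norm_sub_le_mul_dist_of_periodic (y := ζ' j) (q := η j - b) hf (by positivity)
    (h.abs_sub_inner_le hAC hv hmj hjn hL (hT _))
    fun w => by linarith [(abs_le.1 (h'.abs_sub_inner_le hAC' hη hmj hjn hL (hT _) w)).2]
  rwa [sub_sub_sub_cancel_right] at this

end Calibration

theorem statement7_general {d : ℕ} (F : ℤ → Torus d → ℝ)
    (hF : ∀ j : ℤ, ContDiff ℝ 2 fun x : V d => F j (projT x)) (b : V d)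
    (m n : ℤ) (j : ℤ) (hj1 : m < j) (hj2 : j < n) :
    ∃ K : ℝ, 0 ≤ K ∧
      (∀ φ : Torus d → ℝ, Continuous φ → ∀ ζ g ζ' g' : ℝ → V d, ∀ v η : ℤ → V d,
        IsMinimizer F b m n φ ζ g → IsMinimizer F b m n φ ζ' g' →
        AffineOnUnit ζ v m n → AffineOnUnit ζ' η m n →
        ‖v j - η j‖ ≤ K * dist (projT (ζ (j : ℝ))) (projT (ζ' (j : ℝ)))) ∧
      (∀ φ : Torus d → ℝ, Continuous φ → ∀ ζ g ζ' g' : ℝ → V d, ∀ v η : ℤ → V d,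
        IsMaximizer F b m n φ ζ g → IsMaximizer F b m n φ ζ' g' →
        AffineOnUnit ζ v m n → AffineOnUnit ζ' η m n →
        ‖v j - η j‖ ≤ K * dist (projT (ζ (j : ℝ))) (projT (ζ' (j : ℝ)))) := by
  obtain ⟨L, hL, hT⟩ :=
    exists_abs_sub_sub_fderiv_le_of_periodic (hF j) fun x k => by simp only [projT_add_intVec]
  have hFb i := bddAbove_range_of_continuous_comp_projT (hF i).continuous
  have hper {φ : Torus d → ℝ} z k : φ (projT (z + intVec k)) = φ (projT z) := by
    rw [projT_add_intVec]
  refine ⟨6 * (1 / 2 + L) * √d, by positivity, ?_, ?_⟩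
  · intro φ hφ ζ g ζ' g' v η h h' hv hη
    have hφ' := (isCompact_range hφ).bddBelow
    exact IsCalibrated.norm_sub_le_mul_dist hper hL hT (h.isCalibrated hFb hφ' hj1 hj2)
      (h'.isCalibrated hFb hφ' hj1 hj2) h.1 h'.1 hv hη hj1 hj2
  · intro φ hφ ζ g ζ' g' v η h h' hv hη
    have hφ' := (isCompact_range hφ).bddAbove
    exact IsCalibrated.norm_sub_le_mul_dist hper hL hT (h.isCalibrated hFb hφ' hj1 hj2)
      (h'.isCalibrated hFb hφ' hj1 hj2) h.1 h'.1 hv hη hj1 hj2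

theorem statement7 {d : ℕ} (F : ℤ → Torus d → ℝ)
    (hF : ∀ j : ℤ, ContDiff ℝ 2 fun x : V d => F j (projT x)) (b : V d)
    (m n : ℤ) (hmn : m < n) (h2 : 2 ≤ n - m) (j : ℤ) (hj1 : m < j) (hj2 : j < n) :
    ∃ K : ℝ, 0 ≤ K ∧
      (∀ φ : Torus d → ℝ, Continuous φ → ∀ ζ g ζ' g' : ℝ → V d, ∀ v η : ℤ → V d,
        IsMinimizer F b m n φ ζ g → IsMinimizer F b m n φ ζ' g' →
        AffineOnUnit ζ v m n → AffineOnUnit ζ' η m n →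
        ‖v j - η j‖ ≤ K * dist (projT (ζ (j : ℝ))) (projT (ζ' (j : ℝ)))) ∧
      (∀ φ : Torus d → ℝ, Continuous φ → ∀ ζ g ζ' g' : ℝ → V d, ∀ v η : ℤ → V d,
        IsMaximizer F b m n φ ζ g → IsMaximizer F b m n φ ζ' g' →
        AffineOnUnit ζ v m n → AffineOnUnit ζ' η m n →
        ‖v j - η j‖ ≤ K * dist (projT (ζ (j : ℝ))) (projT (ζ' (j : ℝ)))) :=
  statement7_general F hF b m n j hj1 hj2
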